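/- If R is an SMLL⁰ net in normal form for the reduction relation →, then R contains no cut links (R is cut-free). -/

import Mathlib

/-! # SMLL: multiplicative linear logic with synchronization

Formalization of the proof-structures, correctness criterion, reduction and
multi-token machine (SIAM) of Dal Lago, Faggian, Hasuo, Yoshimizu,
"The Geometry of Synchronization". -/

/-- SMLL formulas (in negation normal form):
`A ::= 1 | ⊥ | X | X⊥ | A ⊗ A | A ⅋ A`. -/
inductive Formula : Type
  | one : Formula
  | bot : Formula
  | var : ℕ → Formula
  | covar : ℕ → Formula
  | tens : Formula → Formula → Formula
  | parr : Formula → Formula → Formula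
  deriving DecidableEq

namespace Formula

/-- Linear negation. -/
def dual : Formula → Formula
  | one => bot
  | bot => one
  | var n => covar n
  | covar n => var n
  | tens A B => parr A.dual B.dual
  | parr A B => tens A.dual B.dual

/-- Positive formulas: `P ::= 1 | P ⊗ P`. -/
inductive Positive : Formula → Prop
  | one : Positive one
  | tens {A B : Formula} : Positive A → Positive B → Positive (tens A B)

/-- Negative formulas: `N ::= ⊥ | N ⅋ N`. -/
inductive Negative : Formula → Prop
  | bot : Negative bot
  | parr {A B : Formula} : Negative A → Negative B → Negative (parr A B)

/-- A formula is polarized when it is positive or negative. -/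
def Polarized (A : Formula) : Prop := Positive A ∨ Negative A

/-- Whether `⊥` occurs in a formula. -/
def hasBotB : Formula → Bool
  | one => false
  | bot => true
  | var _ => false
  | covar _ => false
  | tens A B => hasBotB A || hasBotB B
  | parr A B => hasBotB A || hasBotB B

/-- Addresses of occurrences inside a formula: `false` = left, `true` = right. -/
abbrev Addr := List Bool

/-- Subformula at a given address (if the address is meaningful). -/
def sub : Formula → Addr → Option Formula
  | A, [] => some A
  | tens A _, false :: m => sub A m
  | tens _ B, true :: m => sub B m
  | parr A _, false :: m => sub A m
  | parr _ B, true :: m => sub B m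
  | _, _ :: _ => none

def IsAtom : Formula → Prop
  | one => True
  | bot => True
  | var _ => True
  | covar _ => True
  | tens _ _ => False
  | parr _ _ => False

/-- `m` is the address of an occurrence of an atom in `A`. -/
def AtomOcc (A : Formula) (m : Addr) : Prop := ∃ a, sub A m = some a ∧ IsAtom a

/-- The atom occurrence at `m` in `A` is positive (it is `1` or `X`). -/
def PosOcc (A : Formula) (m : Addr) : Prop :=
  ∃ a, sub A m = some a ∧ (a = one ∨ ∃ n, a = var n)

/-- The atom occurrence at `m` in `A` is negative (it is `⊥` or `X⊥`). -/
def NegOcc (A : Formula) (m : Addr) : Prop :=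
  ∃ a, sub A m = some a ∧ (a = bot ∨ ∃ n, a = covar n)

theorem NegOcc.atomOcc {A : Formula} {m : Addr} (h : NegOcc A m) : AtomOcc A m := by
  obtain ⟨a, ha, h⟩ := h
  refine ⟨a, ha, ?_⟩
  rcases h with rfl | ⟨n, rfl⟩ <;> trivial

theorem PosOcc.atomOcc {A : Formula} {m : Addr} (h : PosOcc A m) : AtomOcc A m := by
  obtain ⟨a, ha, h⟩ := h
  refine ⟨a, ha, ?_⟩
  rcases h with rfl | ⟨n, rfl⟩ <;> trivial

end Formula

/-- The sorts of links of an SMLL structure. -/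
inductive LinkSort : Type
  | ax | cut | tens | parr | one | bot | sync
  deriving DecidableEq

/-- An SMLL proof-structure (with boxes): a finite directed multigraph whose
edges are typed by formulas and whose nodes are links.  Every edge is the
conclusion of exactly one link (its `src`); it is the premiss of the link
`tgt`, if any (edges with no target are the conclusions of the structure).
`pIdx` indexes an edge among the premisses of its target (for `⊗`/`⅋`-links:
`0` = left, `1` = right; for sync links it pairs premisses with conclusions);
`cIdx` indexes an edge among the conclusions of its source (for sync links,
the `i`-th conclusion corresponds to the `i`-th premiss).  Each `bot`-link is
the lock of a box; `box n` is the innermost box containing the node `n` and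
`boxes n` is the set of all boxes containing `n`. -/
structure Struct : Type 1 where
  Edge : Type
  Node : Type
  edgeFintype : Fintype Edge
  nodeFintype : Fintype Node
  edgeDecEq : DecidableEq Edge
  nodeDecEq : DecidableEq Node
  typ : Edge → Formula
  sort : Node → LinkSort
  src : Edge → Node
  tgt : Edge → Option Node
  pIdx : Edge → ℕ
  cIdx : Edge → ℕ
  box : Node → Option Node
  boxes : Node → Finset Node

attribute [instance] Struct.edgeFintype Struct.nodeFintype
attribute [instance] Struct.edgeDecEq Struct.nodeDecEq

namespace Struct

variable (S : Struct)

/-- The conclusions of a link. -/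
def concls (n : S.Node) : Finset S.Edge := Finset.univ.filter fun e => S.src e = n

/-- The premisses of a link. -/
def prems (n : S.Node) : Finset S.Edge := Finset.univ.filter fun e => S.tgt e = some n

/-- The conclusions of the structure. -/
def IsConcl (e : S.Edge) : Prop := S.tgt e = none

/-- Well-formedness of an SMLL structure: the constraints that the sort of a
link induces on the number and the types of its premisses and conclusions,
together with the coherence of the nesting of boxes. -/
def WF : Prop :=
  (∀ n, S.sort n = .ax → S.prems n = ∅ ∧
    ∃ e f, e ≠ f ∧ S.concls n = {e, f} ∧ S.typ f = (S.typ e).dual) ∧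
  (∀ n, S.sort n = .cut → S.concls n = ∅ ∧
    ∃ e f, e ≠ f ∧ S.prems n = {e, f} ∧ S.typ f = (S.typ e).dual) ∧
  (∀ n, S.sort n = .tens → ∃ e f g, e ≠ f ∧ S.prems n = {e, f} ∧
    S.pIdx e = 0 ∧ S.pIdx f = 1 ∧ S.concls n = {g} ∧
    S.typ g = .tens (S.typ e) (S.typ f)) ∧
  (∀ n, S.sort n = .parr → ∃ e f g, e ≠ f ∧ S.prems n = {e, f} ∧
    S.pIdx e = 0 ∧ S.pIdx f = 1 ∧ S.concls n = {g} ∧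
    S.typ g = .parr (S.typ e) (S.typ f)) ∧
  (∀ n, S.sort n = .one → S.prems n = ∅ ∧ ∃ e, S.concls n = {e} ∧ S.typ e = .one) ∧
  (∀ n, S.sort n = .bot → S.prems n = ∅ ∧ ∃ e, S.concls n = {e} ∧ S.typ e = .bot) ∧
  (∀ n, S.sort n = .sync →
    (∀ e ∈ S.prems n, (S.typ e).Polarized) ∧
    (∀ e ∈ S.prems n, ∃! f, f ∈ S.concls n ∧ S.cIdx f = S.pIdx e) ∧
    (∀ f ∈ S.concls n, ∃! e, e ∈ S.prems n ∧ S.pIdx e = S.cIdx f) ∧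
    (∀ e ∈ S.prems n, ∀ f ∈ S.concls n, S.cIdx f = S.pIdx e → S.typ f = S.typ e)) ∧
  (∀ n b, b ∈ S.boxes n → S.sort b = .bot) ∧
  (∀ n, S.box n = none → S.boxes n = ∅) ∧
  (∀ n b, S.box n = some b → b ∉ S.boxes b ∧ S.boxes n = insert b (S.boxes b)) ∧
  (∀ e n, S.tgt e = some n → S.boxes n ⊆ S.boxes (S.src e))

/-- `b` is the representative of the node `m` in the level-`ℓ` graph (the
graph in which each box strictly below level `ℓ` is collapsed to a single
box-node, identified with its `bot`-link).  For `ℓ = none` this is the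
`0`-graph. -/
def RepAt (ℓ : Option S.Node) (m b : S.Node) : Prop :=
  (S.box m = ℓ ∧ b = m) ∨ (b ∈ S.boxes m ∧ S.box b = ℓ)

/-- Edge `e` joins the nodes `u` and `v` (undirectedly) in the level-`ℓ` graph. -/
def ConnectsAt (ℓ : Option S.Node) (e : S.Edge) (u v : S.Node) : Prop :=
  ∃ t, S.tgt e = some t ∧ (S.box t = ℓ ∨ S.box (S.src e) = ℓ) ∧
    ((S.RepAt ℓ (S.src e) u ∧ S.RepAt ℓ t v) ∨
     (S.RepAt ℓ (S.src e) v ∧ S.RepAt ℓ t u))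

/-- The out-edges of a sync link are its positive conclusions and its negative
premisses. -/
def OutEdgeOf (l : S.Node) (e : S.Edge) : Prop :=
  S.sort l = .sync ∧
  ((S.src e = l ∧ (S.typ e).Positive) ∨ (S.tgt e = some l ∧ (S.typ e).Negative))

/-- There is a switching cycle in the level-`ℓ` graph: a cyclic undirected
simple path which uses at most one of the two premisses of each `⅋`-link and
at most one out-edge of each sync link. -/
def SwitchingCycleAt (ℓ : Option S.Node) : Prop :=
  ∃ (k : ℕ) (v : Fin (k + 1) → S.Node) (e : Fin (k + 1) → S.Edge),
    Function.Injective v ∧ Function.Injective e ∧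
    (∀ i, S.ConnectsAt ℓ (e i) (v i) (v (i + 1))) ∧
    (∀ p, S.sort p = .parr → Set.Subsingleton {i | S.tgt (e i) = some p}) ∧
    (∀ l, S.sort l = .sync → Set.Subsingleton {i | S.OutEdgeOf l (e i)})

/-- Correctness criterion: no switching cycle in the `0`-graph, and,
recursively, no switching cycle in the graph of the content of any box. -/
def Correct : Prop := ∀ ℓ : Option S.Node, ¬ S.SwitchingCycleAt ℓ

/-- A net is a well-formed correct structure. -/
def IsNet : Prop := S.WF ∧ S.Correct

/-! ## Sync paths and hereditary conclusions -/

/-- One step of a sync path: entering a sync link on a premiss and coming out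
on the corresponding conclusion. -/
def SyncStepE (e f : S.Edge) : Prop :=
  ∃ l, S.sort l = .sync ∧ S.tgt e = some l ∧ S.src f = l ∧ S.cIdx f = S.pIdx e

/-- `e` is a hereditary conclusion of the link `l`: there is a sync path from
a conclusion of `l` to `e`. -/
def HereditaryConcl (l : S.Node) (e : S.Edge) : Prop :=
  ∃ f, S.src f = l ∧ Relation.ReflTransGen S.SyncStepE f e

/-- The edge emerges from a box: its source is a `bot`-link (the edge is the
lock of a box) or lies inside some box. -/
def FromBox (e : S.Edge) : Prop := S.sort (S.src e) = .bot ∨ S.box (S.src e) ≠ none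

/-- `e` is a hereditary conclusion of a box. -/
def HereditaryBoxConcl (e : S.Edge) : Prop :=
  ∃ f, S.FromBox f ∧ Relation.ReflTransGen S.SyncStepE f e

/-- A ready cut: a cut at depth 0 neither of whose premisses is a hereditary
conclusion of a box. -/
def ReadyCut (c : S.Node) : Prop :=
  S.sort c = .cut ∧ S.box c = none ∧ ∀ e ∈ S.prems c, ¬ S.HereditaryBoxConcl e

/-! ## Polarized paths and the order on links -/

/-- A node is polarized when all of its conclusions are polarized. -/
def PolarizedNode (n : S.Node) : Prop := ∀ e ∈ S.concls n, (S.typ e).Polarized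

/-- A single step of a polarized path from link `a` to link `b` along the
polarized edge `e`: downwards on positive edges, upwards on negative edges,
connecting polarized nodes and never entering boxes. -/
def PolStep (e : S.Edge) (a b : S.Node) : Prop :=
  S.box a = none ∧ S.box b = none ∧ S.PolarizedNode a ∧ S.PolarizedNode b ∧
  (((S.typ e).Positive ∧ S.src e = a ∧ S.tgt e = some b) ∨
   ((S.typ e).Negative ∧ S.tgt e = some a ∧ S.src e = b))

/-- `a ≺ b` : there is a (simple) polarized path from `a` to `b`. -/
def prec (a b : S.Node) : Prop :=
  ∃ (k : ℕ) (v : Fin (k + 2) → S.Node) (e : Fin (k + 1) → S.Edge),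
    v 0 = a ∧ v (Fin.last _) = b ∧
    Function.Injective v ∧ Function.Injective e ∧
    ∀ i : Fin (k + 1), S.PolStep (e i) (v i.castSucc) (v i.succ)

/-- SMLL⁰ structures: no unit links (hence no boxes). -/
def UnitFree : Prop := ∀ n : S.Node, S.sort n ≠ .one ∧ S.sort n ≠ .bot

/-- Closed structures: no `⊥` occurs in the conclusions. -/
def Closed : Prop := ∀ e : S.Edge, S.tgt e = none → (S.typ e).hasBotB = false

end Struct

/-! ## Reduction -/

/-- A partial injection `j` whose (some-)range is exactly `X`. -/
def PInjOnto {α β : Type*} (j : α → Option β) (X : Set β) : Prop :=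
  (∀ a a' b, j a = some b → j a' = some b → a = a') ∧
  (∀ a b, j a = some b → b ∈ X) ∧
  (∀ b ∈ X, ∃ a, j a = some b)

/-- `j` is total. -/
def JTotal {α β : Type*} (j : α → Option β) : Prop := ∀ a, j a ≠ none

/-- The structures `Q` and `R` agree, along the correspondences `jN`, `jE`,
on all edges outside `XE` and all nodes outside `XN`. -/
def AgreesOn (Q R : Struct) (jN : Q.Node → Option R.Node)
    (jE : Q.Edge → Option R.Edge) (XE : Set R.Edge) (XN : Set R.Node) : Prop :=
  (∀ x y, jE x = some y → y ∉ XE →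
    Q.typ x = R.typ y ∧ jN (Q.src x) = some (R.src y) ∧
    (Q.tgt x).bind jN = R.tgt y ∧ Q.pIdx x = R.pIdx y ∧ Q.cIdx x = R.cIdx y) ∧
  (∀ n m, jN n = some m → m ∉ XN →
    Q.sort n = R.sort m ∧ (Q.box n).bind jN = R.box m ∧
    (∀ b b', jN b = some b' → (b ∈ Q.boxes n ↔ b' ∈ R.boxes m)))

/-- The `ax/cut` step: a cut between a conclusion `v` of an axiom `a` and the
dual premiss is removed together with the axiom; the remaining conclusion `u`
of the axiom and the remaining premiss `q` of the cut are merged. -/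
def AxCutStep (R Q : Struct) : Prop :=
  ∃ (a c : R.Node) (v u q : R.Edge),
    R.sort a = .ax ∧ R.sort c = .cut ∧ R.box a = none ∧ R.box c = none ∧
    v ≠ u ∧ v ≠ q ∧ u ≠ q ∧
    R.concls a = {v, u} ∧ R.prems c = {v, q} ∧
    ∃ (jN : Q.Node → Option R.Node) (jE : Q.Edge → Option R.Edge),
      JTotal jN ∧ JTotal jE ∧
      PInjOnto jN {n | n ≠ a ∧ n ≠ c} ∧
      PInjOnto jE {x | x ≠ v ∧ x ≠ u} ∧
      AgreesOn Q R jN jE {q} ∅ ∧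
      (∀ x, jE x = some q →
        Q.typ x = R.typ q ∧ jN (Q.src x) = some (R.src q) ∧
        (Q.tgt x).bind jN = R.tgt u ∧ Q.pIdx x = R.pIdx u ∧ Q.cIdx x = R.cIdx q)

/-- The `⊗/⅋` step: a cut between `A ⊗ B` and `A⊥ ⅋ B⊥` is replaced by two
cuts between the respective premisses. -/
def TensParrStep (R Q : Struct) : Prop :=
  ∃ (c t p : R.Node) (s s' a1 a2 b1 b2 : R.Edge),
    R.sort c = .cut ∧ R.sort t = .tens ∧ R.sort p = .parr ∧
    R.box c = none ∧ R.box t = none ∧ R.box p = none ∧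
    s ≠ s' ∧ R.prems c = {s, s'} ∧ R.concls t = {s} ∧ R.concls p = {s'} ∧
    a1 ≠ a2 ∧ R.prems t = {a1, a2} ∧ R.pIdx a1 = 0 ∧ R.pIdx a2 = 1 ∧
    b1 ≠ b2 ∧ R.prems p = {b1, b2} ∧ R.pIdx b1 = 0 ∧ R.pIdx b2 = 1 ∧
    ∃ (jN : Q.Node → Option R.Node) (jE : Q.Edge → Option R.Edge) (c' : Q.Node),
      JTotal jE ∧
      PInjOnto jN {n | n ≠ t ∧ n ≠ p} ∧
      PInjOnto jE {x | x ≠ s ∧ x ≠ s'} ∧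
      jN c' = none ∧ (∀ n, jN n = none → n = c') ∧
      Q.sort c' = .cut ∧ Q.box c' = none ∧ Q.boxes c' = ∅ ∧
      AgreesOn Q R jN jE {a1, a2, b1, b2} ∅ ∧
      (∀ x y, jE x = some y → y = a1 ∨ y = b1 →
        Q.typ x = R.typ y ∧ jN (Q.src x) = some (R.src y) ∧
        (Q.tgt x).bind jN = some c ∧ Q.cIdx x = R.cIdx y) ∧
      (∀ x y, jE x = some y → y = a2 ∨ y = b2 →
        Q.typ x = R.typ y ∧ jN (Q.src x) = some (R.src y) ∧
        Q.tgt x = some c' ∧ Q.cIdx x = R.cIdx y)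

/-- Commutation of a sync link with a `⊗` or `⅋` link: the sync link acting
on the conclusion `z` of the multiplicative link `m` (with corresponding sync
conclusion `w`) is pushed above `m`, now acting on the two premisses `x`, `y`
of `m` via two fresh sync positions (indices `i₁`, `i₂`) with fresh edges
`x'`, `y'`. -/
def SyncMultStep (R Q : Struct) : Prop :=
  ∃ (l m : R.Node) (z w x y : R.Edge) (i₁ i₂ : ℕ),
    R.sort l = .sync ∧ (R.sort m = .tens ∨ R.sort m = .parr) ∧
    R.box l = none ∧ R.box m = none ∧
    R.src z = m ∧ R.tgt z = some l ∧ R.src w = l ∧ R.cIdx w = R.pIdx z ∧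
    x ≠ y ∧ R.prems m = {x, y} ∧ R.pIdx x = 0 ∧ R.pIdx y = 1 ∧
    i₁ ≠ i₂ ∧
    (∀ e, R.tgt e = some l → R.pIdx e ≠ i₁ ∧ R.pIdx e ≠ i₂) ∧
    (∀ e, R.src e = l → R.cIdx e ≠ i₁ ∧ R.cIdx e ≠ i₂) ∧
    ∃ (jN : Q.Node → Option R.Node) (jE : Q.Edge → Option R.Edge)
      (l' m' : Q.Node) (x' y' : Q.Edge),
      JTotal jN ∧ PInjOnto jN Set.univ ∧
      PInjOnto jE {e | e ≠ z} ∧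
      jN l' = some l ∧ jN m' = some m ∧
      x' ≠ y' ∧ jE x' = none ∧ jE y' = none ∧ (∀ e, jE e = none → e = x' ∨ e = y') ∧
      AgreesOn Q R jN jE {x, y, w} ∅ ∧
      (∀ e, jE e = some x →
        Q.typ e = R.typ x ∧ jN (Q.src e) = some (R.src x) ∧
        Q.tgt e = some l' ∧ Q.pIdx e = i₁ ∧ Q.cIdx e = R.cIdx x) ∧
      (∀ e, jE e = some y →
        Q.typ e = R.typ y ∧ jN (Q.src e) = some (R.src y) ∧
        Q.tgt e = some l' ∧ Q.pIdx e = i₂ ∧ Q.cIdx e = R.cIdx y) ∧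
      (∀ e, jE e = some w →
        Q.typ e = R.typ w ∧ Q.src e = m' ∧
        (Q.tgt e).bind jN = R.tgt w ∧ Q.pIdx e = R.pIdx w ∧ Q.cIdx e = R.cIdx w) ∧
      (Q.typ x' = R.typ x ∧ Q.src x' = l' ∧ Q.tgt x' = some m' ∧
        Q.pIdx x' = 0 ∧ Q.cIdx x' = i₁) ∧
      (Q.typ y' = R.typ y ∧ Q.src y' = l' ∧ Q.tgt y' = some m' ∧
        Q.pIdx y' = 1 ∧ Q.cIdx y' = i₂)

/-- Commutation of a sync link with an axiom: a sync link acting on a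
positive conclusion `u` of an axiom (with corresponding conclusion `u'`) is
moved to the axiom's other conclusion `v` (of type `P⊥`), with a fresh sync
position of index `j` and fresh edge `v'`. -/
def SyncAxStep (R Q : Struct) : Prop :=
  ∃ (l a : R.Node) (u u' v : R.Edge) (j : ℕ),
    R.sort l = .sync ∧ R.sort a = .ax ∧ R.box l = none ∧ R.box a = none ∧
    (R.typ u).Positive ∧ u ≠ v ∧ R.concls a = {u, v} ∧
    R.tgt u = some l ∧ R.src u' = l ∧ R.cIdx u' = R.pIdx u ∧ u' ≠ u ∧ u' ≠ v ∧
    (∀ e, R.tgt e = some l → R.pIdx e ≠ j) ∧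
    (∀ e, R.src e = l → R.cIdx e ≠ j) ∧
    ∃ (jN : Q.Node → Option R.Node) (jE : Q.Edge → Option R.Edge)
      (l' a' : Q.Node) (v' : Q.Edge),
      JTotal jN ∧ PInjOnto jN Set.univ ∧ PInjOnto jE {e | e ≠ u} ∧
      jN l' = some l ∧ jN a' = some a ∧
      jE v' = none ∧ (∀ e, jE e = none → e = v') ∧
      AgreesOn Q R jN jE {u', v} ∅ ∧
      (∀ e, jE e = some u' →
        Q.typ e = R.typ u' ∧ Q.src e = a' ∧ Q.cIdx e = R.cIdx u ∧
        (Q.tgt e).bind jN = R.tgt u' ∧ Q.pIdx e = R.pIdx u') ∧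
      (∀ e, jE e = some v →
        Q.typ e = R.typ v ∧ Q.src e = a' ∧ Q.cIdx e = R.cIdx v ∧
        Q.tgt e = some l' ∧ Q.pIdx e = j) ∧
      (Q.typ v' = R.typ v ∧ Q.src v' = l' ∧ Q.cIdx v' = j ∧
        (Q.tgt v').bind jN = R.tgt v ∧ Q.pIdx v' = R.pIdx v)

/-- Commutation of a sync link with a cut: a sync link acting on the premiss
`d'` (of negative type `P⊥`) of a cut is moved to the other premiss `q`. -/
def SyncCutStep (R Q : Struct) : Prop :=
  ∃ (l c : R.Node) (d d' q : R.Edge) (j : ℕ),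
    R.sort l = .sync ∧ R.sort c = .cut ∧ R.box l = none ∧ R.box c = none ∧
    (R.typ d').Negative ∧
    R.src d' = l ∧ R.tgt d' = some c ∧ R.tgt d = some l ∧ R.pIdx d = R.cIdx d' ∧
    d' ≠ q ∧ d ≠ q ∧ d ≠ d' ∧ R.prems c = {d', q} ∧
    (∀ e, R.tgt e = some l → R.pIdx e ≠ j) ∧
    (∀ e, R.src e = l → R.cIdx e ≠ j) ∧
    ∃ (jN : Q.Node → Option R.Node) (jE : Q.Edge → Option R.Edge)
      (l' c' : Q.Node) (q' : Q.Edge),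
      JTotal jN ∧ PInjOnto jN Set.univ ∧ PInjOnto jE {e | e ≠ d'} ∧
      jN l' = some l ∧ jN c' = some c ∧
      jE q' = none ∧ (∀ e, jE e = none → e = q') ∧
      AgreesOn Q R jN jE {d, q} ∅ ∧
      (∀ e, jE e = some d →
        Q.typ e = R.typ d ∧ jN (Q.src e) = some (R.src d) ∧ Q.cIdx e = R.cIdx d ∧
        Q.tgt e = some c' ∧ Q.pIdx e = R.pIdx d') ∧
      (∀ e, jE e = some q →
        Q.typ e = R.typ q ∧ jN (Q.src e) = some (R.src q) ∧ Q.cIdx e = R.cIdx q ∧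
        Q.tgt e = some l' ∧ Q.pIdx e = j) ∧
      (Q.typ q' = R.typ q ∧ Q.src q' = l' ∧ Q.cIdx q' = j ∧
        Q.tgt q' = some c' ∧ Q.pIdx q' = R.pIdx q)

/-- Sync elimination: a sync link all of whose premisses are conclusions of
`one`-links is erased, merging each premiss with its corresponding
conclusion. -/
def SyncElimStep (R Q : Struct) : Prop :=
  ∃ l : R.Node, R.sort l = .sync ∧ R.box l = none ∧
    (∀ e ∈ R.prems l, R.sort (R.src e) = .one) ∧
    ∃ (jN : Q.Node → Option R.Node) (jE : Q.Edge → Option R.Edge),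
      JTotal jN ∧ JTotal jE ∧
      PInjOnto jN {n | n ≠ l} ∧
      PInjOnto jE {e | R.src e ≠ l} ∧
      AgreesOn Q R jN jE {e | R.tgt e = some l} ∅ ∧
      (∀ x e f, jE x = some e → R.tgt e = some l → R.src f = l →
        R.cIdx f = R.pIdx e →
        Q.typ x = R.typ e ∧ jN (Q.src x) = some (R.src e) ∧
        (Q.tgt x).bind jN = R.tgt f ∧ Q.pIdx x = R.pIdx f ∧ Q.cIdx x = R.cIdx e)

/-- The `one/⊥` step (box opening): a cut between the conclusion `o` of a
`one`-link `n₁` and the lock `k` of a box `b` removes the cut, the `one`-link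
and the `bot`-link, and opens the box. -/
def OneBotStep (R Q : Struct) : Prop :=
  ∃ (c n₁ b : R.Node) (o k : R.Edge),
    R.sort c = .cut ∧ R.sort n₁ = .one ∧ R.sort b = .bot ∧
    R.box c = none ∧ R.box n₁ = none ∧ R.box b = none ∧
    o ≠ k ∧ R.prems c = {o, k} ∧ R.src o = n₁ ∧ R.src k = b ∧
    ∃ (jN : Q.Node → Option R.Node) (jE : Q.Edge → Option R.Edge),
      JTotal jN ∧ JTotal jE ∧
      PInjOnto jN {n | n ≠ c ∧ n ≠ n₁ ∧ n ≠ b} ∧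
      PInjOnto jE {e | e ≠ o ∧ e ≠ k} ∧
      (∀ x e, jE x = some e →
        Q.typ x = R.typ e ∧ jN (Q.src x) = some (R.src e) ∧
        (Q.tgt x).bind jN = R.tgt e ∧ Q.pIdx x = R.pIdx e ∧ Q.cIdx x = R.cIdx e) ∧
      (∀ n m, jN n = some m →
        Q.sort n = R.sort m ∧
        (∀ b₀ b₀', jN b₀ = some b₀' → (b₀ ∈ Q.boxes n ↔ b₀' ∈ R.boxes m ∧ b₀' ≠ b)) ∧
        (R.box m = some b → Q.box n = none) ∧
        (R.box m ≠ some b → (Q.box n).bind jN = R.box m))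

/-- The sync-commutation and sync-elimination steps. -/
def SyncRed (R Q : Struct) : Prop :=
  SyncMultStep R Q ∨ SyncAxStep R Q ∨ SyncCutStep R Q ∨ SyncElimStep R Q

/-- The reduction relation `→` on SMLL structures (applied at depth 0 only). -/
def Step (R Q : Struct) : Prop :=
  AxCutStep R Q ∨ TensParrStep R Q ∨ SyncRed R Q ∨ OneBotStep R Q

/-- Isomorphism of structures. -/
def Isom (R Q : Struct) : Prop :=
  ∃ (en : R.Node ≃ Q.Node) (ee : R.Edge ≃ Q.Edge),
    (∀ e, Q.typ (ee e) = R.typ e) ∧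
    (∀ e, Q.src (ee e) = en (R.src e)) ∧
    (∀ e, Q.tgt (ee e) = (R.tgt e).map en) ∧
    (∀ e, Q.pIdx (ee e) = R.pIdx e) ∧
    (∀ e, Q.cIdx (ee e) = R.cIdx e) ∧
    (∀ n, Q.sort (en n) = R.sort n) ∧
    (∀ n, Q.box (en n) = (R.box n).map en) ∧
    (∀ n, Q.boxes (en n) = (R.boxes n).image en)

/-! ## The SIAM: a synchronous interaction abstract machine -/

namespace Struct

variable (S : Struct)

/-- The value of a token: either an occurrence of an atom on an edge, or a
position `(e, i)` on the lock `e` of a box (`BOTBOX`). -/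
inductive PosVal (S : Struct) : Type
  | atom : S.Edge → Formula.Addr → PosVal S
  | lock : S.Edge → ℕ → PosVal S

/-- Initial positions: negative atom occurrences in the conclusions. -/
def InitPos (p : S.Edge × Formula.Addr) : Prop :=
  S.tgt p.1 = none ∧ Formula.NegOcc (S.typ p.1) p.2

/-- Final positions: positive atom occurrences in the conclusions. -/
def FinPos (p : S.Edge × Formula.Addr) : Prop :=
  S.tgt p.1 = none ∧ Formula.PosOcc (S.typ p.1) p.2

/-- One positions: conclusions of `one`-links. -/
def OnePos (p : S.Edge × Formula.Addr) : Prop :=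
  S.sort (S.src p.1) = .one ∧ p.2 = []

/-- Valid token values: genuine atom occurrences, or positions on the lock of
a box. -/
def ValidVal : PosVal S → Prop
  | .atom e m => Formula.AtomOcc (S.typ e) m
  | .lock e _ => S.sort (S.src e) = .bot

end Struct

/-- A state of the SIAM machine `M_S`: a (partial) function from
`INIT(S) ∪ L` (with `L ⊆ ONES(S)`) to the positions of `S`; it records, for
each token, its origin and its current position. -/
structure SState (S : Struct) where
  f : S.Edge × Formula.Addr → Option (Struct.PosVal S)
  dom_subset : ∀ p, f p ≠ none → S.InitPos p ∨ S.OnePos p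
  init_total : ∀ p, S.InitPos p → f p ≠ none
  val_valid : ∀ p v, f p = some v → S.ValidVal v

namespace Struct

variable (S : Struct)

/-- The box `b` is unlocked in state `T`: some token sits on its lock. -/
def Unlocked (T : SState S) (b : S.Node) : Prop :=
  ∃ p e i, T.f p = some (.lock e i) ∧ S.src e = b

/-- A link is active: all the boxes containing it are unlocked. -/
def Active (T : SState S) (n : S.Node) : Prop :=
  ∀ b ∈ S.boxes n, S.Unlocked T b

end Struct

open Classical in
/-- The initial state `I_S`: the identity on the initial positions. -/
noncomputable def initState (S : Struct) : SState S where
  f := fun p => if S.InitPos p then some (.atom p.1 p.2) else none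
  dom_subset := by
    intro p hp
    by_cases h : S.InitPos p
    · exact Or.inl h
    · simp [h] at hp
  init_total := by intro p hp; simp [hp]
  val_valid := by
    intro p v hv
    by_cases h : S.InitPos p
    · simp only [if_pos h, Option.some.injEq] at hv
      subst hv
      exact h.2.atomOcc
    · simp [h] at hv

/-- The transition relation of the SIAM.  Tokens on negative atom occurrences
move upwards, tokens on positive atom occurrences move downwards; all tokens
cross a sync link simultaneously, when each of its in-edges is saturated;
active `one`-links may spawn a token; a token reaching the lock of a box
unlocks it.  Tokens may only cross active links (so they can enter a box only
when it is unlocked). -/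
inductive STrans (S : Struct) : SState S → SState S → Prop
  | axUp {T T' : SState S} {p : S.Edge × Formula.Addr} {e e' : S.Edge}
      {m : Formula.Addr} {a : S.Node} :
      T.f p = some (.atom e m) →
      Formula.NegOcc (S.typ e) m →
      S.src e = a → S.sort a = .ax → S.Active T a →
      S.src e' = a → e' ≠ e →
      (∀ q, q ≠ p → T'.f q = T.f q) →
      T'.f p = some (.atom e' m) →
      STrans S T T'
  | cutDown {T T' : SState S} {p : S.Edge × Formula.Addr} {e e' : S.Edge}
      {m : Formula.Addr} {c : S.Node} :
      T.f p = some (.atom e m) →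
      Formula.PosOcc (S.typ e) m →
      S.tgt e = some c → S.sort c = .cut → S.Active T c →
      S.tgt e' = some c → e' ≠ e →
      (∀ q, q ≠ p → T'.f q = T.f q) →
      T'.f p = some (.atom e' m) →
      STrans S T T'
  | multDown {T T' : SState S} {p : S.Edge × Formula.Addr} {e g : S.Edge}
      {m : Formula.Addr} {n : S.Node} {b : Bool} :
      T.f p = some (.atom e m) →
      Formula.PosOcc (S.typ e) m →
      S.tgt e = some n → (S.sort n = .tens ∨ S.sort n = .parr) → S.Active T n →
      S.src g = n →
      S.pIdx e = (if b then 1 else 0) →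
      (∀ q, q ≠ p → T'.f q = T.f q) →
      T'.f p = some (.atom g (b :: m)) →
      STrans S T T'
  | multUp {T T' : SState S} {p : S.Edge × Formula.Addr} {e g : S.Edge}
      {m : Formula.Addr} {n : S.Node} {b : Bool} :
      T.f p = some (.atom g (b :: m)) →
      Formula.NegOcc (S.typ g) (b :: m) →
      S.src g = n → (S.sort n = .tens ∨ S.sort n = .parr) → S.Active T n →
      S.tgt e = some n →
      S.pIdx e = (if b then 1 else 0) →
      (∀ q, q ≠ p → T'.f q = T.f q) →
      T'.f p = some (.atom e m) →
      STrans S T T'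
  | lockTok {T T' : SState S} {p : S.Edge × Formula.Addr} {e : S.Edge}
      {b' : S.Node} :
      T.f p = some (.atom e []) →
      S.typ e = .bot →
      S.src e = b' → S.sort b' = .bot → S.Active T b' →
      (∀ q, q ≠ p → T'.f q = T.f q) →
      T'.f p = some (.lock e 0) →
      STrans S T T'
  | oneSpawn {T T' : SState S} {n : S.Node} {e : S.Edge} :
      S.sort n = .one → S.Active T n → S.src e = n →
      T.f (e, []) = none →
      (∀ q, q ≠ (e, []) → T'.f q = T.f q) →
      T'.f (e, []) = some (.atom e []) →
      STrans S T T'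
  | syncCross {T T' : SState S} {l : S.Node} :
      S.sort l = .sync → S.Active T l →
      (∃ q e m, T.f q = some (.atom e m) ∧
        ((S.tgt e = some l ∧ (S.typ e).Positive) ∨
         (S.src e = l ∧ (S.typ e).Negative))) →
      (∀ e, ((S.tgt e = some l ∧ (S.typ e).Positive) ∨
             (S.src e = l ∧ (S.typ e).Negative)) →
        ∀ m, Formula.AtomOcc (S.typ e) m → ∃ q, T.f q = some (.atom e m)) →
      (∀ q e m, T.f q = some (.atom e m) → S.tgt e = some l → (S.typ e).Positive →
        ∃ e', S.src e' = l ∧ S.cIdx e' = S.pIdx e ∧ T'.f q = some (.atom e' m)) →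
      (∀ q e m, T.f q = some (.atom e m) → S.src e = l → (S.typ e).Negative →
        ∃ e', S.tgt e' = some l ∧ S.pIdx e' = S.cIdx e ∧ T'.f q = some (.atom e' m)) →
      (∀ q, (∀ e m, T.f q = some (.atom e m) →
          ¬(S.tgt e = some l ∧ (S.typ e).Positive) ∧
          ¬(S.src e = l ∧ (S.typ e).Negative)) →
        T'.f q = T.f q) →
      STrans S T T'

/-- A final state: its image consists of all the final positions together
with positions on the locks of boxes. -/
def SState.Final {S : Struct} (T : SState S) : Prop :=
  (∀ q v, T.f q = some v →
    (∃ e m, v = .atom e m ∧ S.FinPos (e, m)) ∨ (∃ e i, v = .lock e i)) ∧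
  (∀ e m, S.FinPos (e, m) → ∃ q, T.f q = some (.atom e m))

/-- The machine of `S` deadlocks: some maximal transition sequence from the
initial state ends in a non-final state. -/
def Deadlocks (S : Struct) : Prop :=
  ∃ T : SState S, Relation.ReflTransGen (STrans S) (initState S) T ∧
    (∀ T', ¬ STrans S T T') ∧ ¬ T.Final

/-- The machine of `S` is deadlock free: every maximal transition sequence
from the initial state ends in a final state. -/
def DeadlockFree (S : Struct) : Prop :=
  ∀ T : SState S, Relation.ReflTransGen (STrans S) (initState S) T →
    (∀ T', ¬ STrans S T T') → T.Final

/-! ## The closure of a net -/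

/-- A structure with a designated (main) conclusion. -/
structure PNet : Type 1 where
  S : Struct
  main : S.Edge

/-- The net consisting of a single `one`-link. -/
def oneNet : PNet where
  S :=
    { Edge := Unit
      Node := Unit
      edgeFintype := inferInstance
      nodeFintype := inferInstance
      edgeDecEq := inferInstance
      nodeDecEq := inferInstance
      typ := fun _ => .one
      sort := fun _ => .one
      src := fun _ => ()
      tgt := fun _ => none
      pIdx := fun _ => 0
      cIdx := fun _ => 0
      box := fun _ => none
      boxes := fun _ => ∅ }
  main := ()

/-- The net consisting of a single axiom of conclusions `A⊥, A`, with main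
conclusion `A`. -/
def axNet (A : Formula) : PNet where
  S :=
    { Edge := Bool
      Node := Unit
      edgeFintype := inferInstance
      nodeFintype := inferInstance
      edgeDecEq := inferInstance
      nodeDecEq := inferInstance
      typ := fun e => if e then A else A.dual
      sort := fun _ => .ax
      src := fun _ => ()
      tgt := fun _ => none
      pIdx := fun _ => 0
      cIdx := fun e => if e then 1 else 0
      box := fun _ => none
      boxes := fun _ => ∅ }
  main := true

/-- Joining the main conclusions of two nets by a binary link of sort `s`
and conclusion type `C`. -/
def joinNet (s : LinkSort) (C : Formula) (P Q : PNet) : PNet where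
  S :=
    { Edge := Option (P.S.Edge ⊕ Q.S.Edge)
      Node := Option (P.S.Node ⊕ Q.S.Node)
      edgeFintype := inferInstance
      nodeFintype := inferInstance
      edgeDecEq := inferInstance
      nodeDecEq := inferInstance
      typ := fun e =>
        match e with
        | none => C
        | some (.inl x) => P.S.typ x
        | some (.inr y) => Q.S.typ y
      sort := fun n =>
        match n with
        | none => s
        | some (.inl x) => P.S.sort x
        | some (.inr y) => Q.S.sort y
      src := fun e =>
        match e with
        | none => none
        | some (.inl x) => some (.inl (P.S.src x))
        | some (.inr y) => some (.inr (Q.S.src y))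
      tgt := fun e =>
        match e with
        | none => none
        | some (.inl x) =>
            if x = P.main then some none
            else (P.S.tgt x).map fun n => some (.inl n)
        | some (.inr y) =>
            if y = Q.main then some none
            else (Q.S.tgt y).map fun n => some (.inr n)
      pIdx := fun e =>
        match e with
        | none => 0
        | some (.inl x) => if x = P.main then 0 else P.S.pIdx x
        | some (.inr y) => if y = Q.main then 1 else Q.S.pIdx y
      cIdx := fun e =>
        match e with
        | none => 0
        | some (.inl x) => P.S.cIdx x
        | some (.inr y) => Q.S.cIdx y
      box := fun n =>
        match n with
        | none => none
        | some (.inl x) => (P.S.box x).map fun m => some (.inl m)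
        | some (.inr y) => (Q.S.box y).map fun m => some (.inr m)
      boxes := fun n =>
        match n with
        | none => ∅
        | some (.inl x) => (P.S.boxes x).image fun m => some (.inl m)
        | some (.inr y) => (Q.S.boxes y).image fun m => some (.inr m) }
  main := none

/-- The net `R°(A)`, by induction on `A`: it has conclusions `Γ, A` with no
occurrence of `⊥` in `Γ`, and main conclusion `A`. -/
def circNet : Formula → PNet
  | .one => oneNet
  | .bot => axNet .bot
  | .var n => axNet (.var n)
  | .covar n => axNet (.covar n)
  | .tens A B => joinNet .tens (.tens A B) (circNet A) (circNet B)
  | .parr A B => joinNet .parr (.parr A B) (circNet A) (circNet B)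

/-- The conclusions of `R` containing an occurrence of `⊥`. -/
abbrev BadC (R : Struct) :=
  {e : R.Edge // R.tgt e = none ∧ (R.typ e).hasBotB = true}

/-- The closure `R̂` of `R`: each conclusion `A` of `R` containing `⊥` is cut
against the main conclusion of a copy of `R°(A⊥)`. -/
def netClosure (R : Struct) : Struct where
  Edge := R.Edge ⊕ Σ e : BadC R, (circNet (R.typ e.val).dual).S.Edge
  Node := R.Node ⊕ ((Σ e : BadC R, (circNet (R.typ e.val).dual).S.Node) ⊕ BadC R)
  edgeFintype := inferInstance
  nodeFintype := inferInstance
  edgeDecEq := inferInstance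
  nodeDecEq := inferInstance
  typ := fun e =>
    match e with
    | .inl e => R.typ e
    | .inr ⟨b, x⟩ => (circNet (R.typ b.val).dual).S.typ x
  sort := fun n =>
    match n with
    | .inl n => R.sort n
    | .inr (.inl ⟨b, x⟩) => (circNet (R.typ b.val).dual).S.sort x
    | .inr (.inr _) => .cut
  src := fun e =>
    match e with
    | .inl e => .inl (R.src e)
    | .inr ⟨b, x⟩ => .inr (.inl ⟨b, (circNet (R.typ b.val).dual).S.src x⟩)
  tgt := fun e =>
    match e with
    | .inl e =>
        if h : R.tgt e = none ∧ (R.typ e).hasBotB = true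
        then some (.inr (.inr ⟨e, h⟩))
        else (R.tgt e).map Sum.inl
    | .inr ⟨b, x⟩ =>
        if x = (circNet (R.typ b.val).dual).main
        then some (.inr (.inr b))
        else ((circNet (R.typ b.val).dual).S.tgt x).map fun n => .inr (.inl ⟨b, n⟩)
  pIdx := fun e =>
    match e with
    | .inl e => R.pIdx e
    | .inr ⟨b, x⟩ =>
        if x = (circNet (R.typ b.val).dual).main then 1
        else (circNet (R.typ b.val).dual).S.pIdx x
  cIdx := fun e =>
    match e with
    | .inl e => R.cIdx e
    | .inr ⟨b, x⟩ => (circNet (R.typ b.val).dual).S.cIdx x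
  box := fun n =>
    match n with
    | .inl n => (R.box n).map Sum.inl
    | .inr (.inl ⟨b, x⟩) =>
        ((circNet (R.typ b.val).dual).S.box x).map fun m => .inr (.inl ⟨b, m⟩)
    | .inr (.inr _) => none
  boxes := fun n =>
    match n with
    | .inl n => (R.boxes n).image Sum.inl
    | .inr (.inl ⟨b, x⟩) =>
        ((circNet (R.typ b.val).dual).S.boxes x).image fun m => .inr (.inl ⟨b, m⟩)
    | .inr (.inr _) => ∅

/-! A cut of a unit-free net has two premisses, each the conclusion of an axiom, a `⊗`, a `⅋` or a
sync link. An axiom gives an `ax/cut` redex: the premisses cannot both be conclusions of the axiom,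
as this would be a switching cycle of length two. Two multiplicative links must be a `⊗` and a
`⅋` by duality, a `⊗/⅋` redex. A sync link whose conclusion is a negative premiss commutes with the
cut. Finally, in a normal form no sync link has a positive conclusion: the corresponding premiss is
positive and comes from an axiom (a sync/axiom redex), a `⊗` (a sync/`⊗` redex, unless a switching
cycle of length two) or another sync link; by finiteness, this last case closes a cycle of
positive edges between sync links, which is a switching cycle. -/

namespace Formula

lemma Positive.not_negative {A : Formula} (hA : A.Positive) : ¬ A.Negative := by
  intro h
  cases hA <;> cases h

end Formula

namespace Function

lemma exists_cycle_of_finite {α : Type*} [Finite α] (f : α → α) (x : α) :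
    ∃ (k : ℕ) (v : Fin (k + 1) → α), Injective v ∧ ∀ i, v (i + 1) = f (v i) := by
  obtain ⟨m, n, hmn, hfmn⟩ := Finite.exists_ne_map_eq_of_infinite (f^[·] x)
  wlog hlt : m < n generalizing m n
  · exact this n m hmn.symm hfmn.symm (by omega)
  have hper : f^[m] x ∈ periodicPts f := by
    refine mk_mem_periodicPts (n := n - m) (by omega) ?_
    rw [IsPeriodicPt, IsFixedPt, ← iterate_add_apply, Nat.sub_add_cancel hlt.le]
    exact hfmn.symm
  set y := f^[m] x
  obtain ⟨k, hk⟩ : ∃ k, minimalPeriod f y = k + 1 :=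
    Nat.exists_eq_add_one.2 (minimalPeriod_pos_of_mem_periodicPts hper)
  refine ⟨k, fun i => f^[i] y, fun i j hij => ?_, fun i => ?_⟩
  · exact Fin.ext <|
      iterate_injOn_Iio_minimalPeriod (by simp [hk, i.isLt]) (by simp [hk, j.isLt]) hij
  · dsimp only
    have hmod := (isPeriodicPt_minimalPeriod f y).iterate_mod_apply (i + 1)
    rw [hk] at hmod
    rw [Fin.val_add, Fin.val_one', Nat.add_mod_mod, hmod, iterate_succ_apply']

end Function

lemma pInjOnto_some_univ {α : Type*} : PInjOnto (some : α → Option α) Set.univ :=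
  ⟨fun _ _ _ h h' => Option.some_injective _ (h.trans h'.symm), fun _ _ _ => trivial,
    fun b _ => ⟨b, rfl⟩⟩

lemma pInjOnto_subtype_val {α : Type*} (p : α → Prop) :
    PInjOnto (fun x : Subtype p => some x.val) {a | p a} :=
  ⟨fun _ _ _ h h' => Subtype.ext (Option.some_injective _ (h.trans h'.symm)),
    fun x _ h => Option.some_injective _ h ▸ x.2, fun b hb => ⟨⟨b, hb⟩, rfl⟩⟩

lemma eq_of_ite_none_eq_some {α : Type*} [DecidableEq α] {a x y : α}
    (h : (if x = a then none else some x) = some y) : x ≠ a ∧ x = y := by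
  split_ifs at h with hx
  exact ⟨hx, Option.some_injective _ h⟩

lemma pInjOnto_ite_none {α : Type*} [DecidableEq α] (a : α) :
    PInjOnto (fun x => if x = a then none else some x) {x | x ≠ a} :=
  ⟨fun _ _ _ h h' => (eq_of_ite_none_eq_some h).2.trans (eq_of_ite_none_eq_some h').2.symm,
    fun _ _ h => (eq_of_ite_none_eq_some h).2 ▸ (eq_of_ite_none_eq_some h).1,
    fun b hb => ⟨b, if_neg hb⟩⟩

lemma pInjOnto_subtype_ite_none {α : Type*} [DecidableEq α] (p : α → Prop) (a : α) :
    PInjOnto (fun x : Subtype p => if x.1 = a then none else some x.1) {b | b ≠ a ∧ p b} :=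
  ⟨fun _ _ _ h h' =>
      Subtype.ext ((eq_of_ite_none_eq_some h).2.trans (eq_of_ite_none_eq_some h').2.symm),
    fun x _ h => (eq_of_ite_none_eq_some h).2 ▸ ⟨(eq_of_ite_none_eq_some h).1, x.2⟩,
    fun b hb => ⟨⟨b, hb.2⟩, if_neg hb.1⟩⟩

lemma PInjOnto.bind {α β : Type*} {j : α → Option β} {X : Set β} (hj : PInjOnto j X) :
    PInjOnto (fun o : Option α => o.bind j) X := by
  obtain ⟨hinj, hmem, hsurj⟩ := hj
  refine ⟨?_, ?_, fun b hb => (hsurj b hb).elim fun a ha => ⟨some a, ha⟩⟩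
  · rintro (_ | a) (_ | a') b h h' <;> simp only [Option.bind_none, reduceCtorEq] at h h'
    exact congrArg some (hinj a a' b h h')
  · rintro (_ | a) b h
    · exact absurd h (by simp)
    · exact hmem a b h

def subtypeOrNone {α : Type*} (p : α → Prop) [DecidablePred p] (a : α) : Option (Subtype p) :=
  if h : p a then some ⟨a, h⟩ else none

lemma bind_subtypeOrNone_bind {α β : Type*} {p : α → Prop} [DecidablePred p] (o : Option α)
    (f : α → Option β) (h : ∀ a ∈ o, p a) :
    (o.bind (subtypeOrNone p)).bind (fun x => f x.val) = o.bind f := by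
  cases o with
  | none => rfl
  | some a => simp [subtypeOrNone, h a rfl]

namespace Struct

open Function

variable {R : Struct}

/-! ## Well-formed structures -/

lemma mem_prems {e : R.Edge} {n : R.Node} : e ∈ R.prems n ↔ R.tgt e = some n := by
  simp [prems]

lemma mem_concls {e : R.Edge} {n : R.Node} : e ∈ R.concls n ↔ R.src e = n := by
  simp [concls]

lemma WF.tgt_ne_of_ax (hWF : R.WF) {a : R.Node} (ha : R.sort a = .ax) (x : R.Edge) :
    R.tgt x ≠ some a := fun h =>
  Finset.notMem_empty x ((hWF.1 a ha).1 ▸ mem_prems.2 h)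

lemma WF.src_ne_of_cut (hWF : R.WF) {c : R.Node} (hc : R.sort c = .cut) (x : R.Edge) :
    R.src x ≠ c := fun h =>
  Finset.notMem_empty x ((hWF.2.1 c hc).1 ▸ mem_concls.2 h)

lemma WF.exists_ax_concls (hWF : R.WF) {v : R.Edge} (ha : R.sort (R.src v) = .ax) :
    ∃ u, v ≠ u ∧ R.concls (R.src v) = {v, u} := by
  obtain ⟨-, e, f, hef, hconcls, -⟩ := hWF.1 _ ha
  have hv : v ∈ R.concls (R.src v) := mem_concls.2 rfl
  rw [hconcls, Finset.mem_insert, Finset.mem_singleton] at hv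
  rcases hv with rfl | rfl
  · exact ⟨f, hef, hconcls⟩
  · exact ⟨e, hef.symm, hconcls.trans (Finset.pair_comm e v)⟩

lemma WF.tens_concl (hWF : R.WF) {g : R.Edge} (ht : R.sort (R.src g) = .tens) :
    ∃ x y, x ≠ y ∧ R.prems (R.src g) = {x, y} ∧ R.pIdx x = 0 ∧ R.pIdx y = 1 ∧
      R.concls (R.src g) = {g} ∧ R.typ g = .tens (R.typ x) (R.typ y) := by
  obtain ⟨x, y, g', hxy, hprems, hx, hy, hconcls, htyp⟩ := hWF.2.2.1 _ ht
  obtain rfl : g = g' := Finset.mem_singleton.1 (hconcls ▸ mem_concls.2 rfl)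
  exact ⟨x, y, hxy, hprems, hx, hy, hconcls, htyp⟩

lemma WF.parr_concl (hWF : R.WF) {g : R.Edge} (hp : R.sort (R.src g) = .parr) :
    ∃ x y, x ≠ y ∧ R.prems (R.src g) = {x, y} ∧ R.pIdx x = 0 ∧ R.pIdx y = 1 ∧
      R.concls (R.src g) = {g} ∧ R.typ g = .parr (R.typ x) (R.typ y) := by
  obtain ⟨x, y, g', hxy, hprems, hx, hy, hconcls, htyp⟩ := hWF.2.2.2.1 _ hp
  obtain rfl : g = g' := Finset.mem_singleton.1 (hconcls ▸ mem_concls.2 rfl)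
  exact ⟨x, y, hxy, hprems, hx, hy, hconcls, htyp⟩

lemma WF.exists_sync_prem (hWF : R.WF) {l : R.Node} (hl : R.sort l = .sync) {f : R.Edge}
    (hf : R.src f = l) : ∃ e, R.tgt e = some l ∧ R.pIdx e = R.cIdx f ∧ R.typ f = R.typ e := by
  obtain ⟨-, -, hconcl, htyp⟩ := hWF.2.2.2.2.2.2.1 l hl
  obtain ⟨e, ⟨he, hidx⟩, -⟩ := hconcl f (mem_concls.2 hf)
  exact ⟨e, mem_prems.1 he, hidx, htyp e he f (mem_concls.2 hf) hidx.symm⟩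

lemma WF.exists_sync_concl (hWF : R.WF) {l : R.Node} (hl : R.sort l = .sync) {e : R.Edge}
    (he : R.tgt e = some l) : ∃ f, R.src f = l ∧ R.cIdx f = R.pIdx e ∧ R.typ f = R.typ e := by
  obtain ⟨-, hprem, -, htyp⟩ := hWF.2.2.2.2.2.2.1 l hl
  obtain ⟨f, ⟨hf, hidx⟩, -⟩ := hprem e (mem_prems.2 he)
  exact ⟨f, mem_concls.1 hf, hidx, htyp e (mem_prems.2 he) f hf hidx⟩

lemma WF.polarized_of_src_sync (hWF : R.WF) {f : R.Edge} (hl : R.sort (R.src f) = .sync) :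
    (R.typ f).Polarized := by
  obtain ⟨e, he, -, htyp⟩ := hWF.exists_sync_prem hl rfl
  exact htyp ▸ (hWF.2.2.2.2.2.2.1 _ hl).1 e (mem_prems.2 he)

lemma WF.sort_eq_bot_of_box_eq_some (hWF : R.WF) {n b : R.Node} (h : R.box n = some b) :
    R.sort b = .bot := by
  obtain ⟨-, -, -, -, -, -, -, hbot, -, hbox, -⟩ := hWF
  exact hbot n b ((hbox n b h).2 ▸ Finset.mem_insert_self b _)

lemma WF.ne_of_box_eq_some (hWF : R.WF) {n b a : R.Node} (h : R.box n = some b)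
    (ha : R.sort a ≠ .bot) : b ≠ a := by
  rintro rfl
  exact ha (hWF.sort_eq_bot_of_box_eq_some h)

lemma WF.boxes_eq_empty (hWF : R.WF) {n : R.Node} (h : R.box n = none) : R.boxes n = ∅ :=
  hWF.2.2.2.2.2.2.2.2.1 n h

lemma UnitFree.box_eq_none (h0 : R.UnitFree) (hWF : R.WF) (n : R.Node) : R.box n = none :=
  Option.eq_none_iff_forall_ne_some.2 fun _ h => (h0 _).2 (hWF.sort_eq_bot_of_box_eq_some h)

/-! ## Switching cycles -/

lemma connectsAt_none {e : R.Edge} {t : R.Node} (ht : R.tgt e = some t)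
    (hs0 : R.box (R.src e) = none) (ht0 : R.box t = none) :
    R.ConnectsAt none e (R.src e) t :=
  ⟨t, ht, Or.inl ht0, Or.inl ⟨Or.inl ⟨hs0, rfl⟩, Or.inl ⟨ht0, rfl⟩⟩⟩

lemma ConnectsAt.symm {ℓ : Option R.Node} {e : R.Edge} {u v : R.Node}
    (h : R.ConnectsAt ℓ e u v) : R.ConnectsAt ℓ e v u := by
  obtain ⟨t, ht, hℓ, h⟩ := h
  exact ⟨t, ht, hℓ, h.symm⟩

lemma Correct.false_of_two_cycle (hC : R.Correct) {e₁ e₂ : R.Edge} {u v : R.Node}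
    (he : e₁ ≠ e₂) (huv : u ≠ v)
    (h₁ : R.ConnectsAt none e₁ u v) (h₂ : R.ConnectsAt none e₂ u v)
    (hparr : ∀ p, R.sort p = .parr → ¬(R.tgt e₁ = some p ∧ R.tgt e₂ = some p))
    (hsync : ∀ l, R.sort l = .sync → ¬(R.OutEdgeOf l e₁ ∧ R.OutEdgeOf l e₂)) :
    False := by
  apply hC none
  refine ⟨1, ![u, v], ![e₁, e₂], ?_, ?_, ?_, ?_, ?_⟩
  · intro i j h
    fin_cases i <;> fin_cases j <;> simp_all
  · intro i j h
    fin_cases i <;> fin_cases j <;> simp_all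
  · intro i
    fin_cases i
    · simpa using h₁
    · simpa using h₂.symm
  · intro p hp i hi j hj
    have := hparr p hp
    fin_cases i <;> fin_cases j <;> simp_all
  · intro l hl i hi j hj
    have := hsync l hl
    fin_cases i <;> fin_cases j <;> simp_all

/-- By finiteness the predecessors close a directed cycle of positive edges, which uses exactly one
out-edge (a positive conclusion) of each of its sync links. -/
lemma Correct.false_of_positive_sync_predecessors (hC : R.Correct) (P : R.Node → Prop)
    (hP : ∀ n, P n → R.sort n = .sync ∧ R.box n = none)
    (hpred : ∀ n, P n → ∃ g, R.tgt g = some n ∧ (R.typ g).Positive ∧ P (R.src g))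
    {n : R.Node} (hn : P n) : False := by
  choose g hg_tgt hg_pos hg_src using hpred
  obtain ⟨k, v, hv, hv_succ⟩ := exists_cycle_of_finite
    (fun m : {m // P m} => ⟨R.src (g m m.2), hg_src m m.2⟩) ⟨n, hn⟩
  set e : Fin (k + 1) → R.Edge := fun i => g (v i) (v i).2
  have he_tgt (i) : R.tgt (e i) = some (v i).val := hg_tgt _ _
  have he_src (i) : R.src (e i) = v (i + 1) := by rw [hv_succ]
  have hv' : Injective fun i => (v i).val := Subtype.val_injective.comp hv
  apply hC none
  refine ⟨k, fun i => v i, e, hv', fun i j hij => hv' ?_, fun i => ?_, ?_, ?_⟩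
  · simpa [he_tgt] using congrArg R.tgt hij
  · have := connectsAt_none (he_tgt i) (he_src i ▸ (hP _ (v (i + 1)).2).2) (hP _ (v i).2).2
    rw [he_src] at this
    exact this.symm
  · intro p hp i hi
    rw [Set.mem_ofPred_eq, he_tgt, Option.some_inj] at hi
    simp [← hi, (hP _ (v i).2).1] at hp
  · have hout {l : R.Node} {i} (h : R.OutEdgeOf l (e i)) : (v (i + 1)).val = l := by
      rcases h.2 with ⟨h, -⟩ | ⟨-, h⟩
      · rw [← he_src, h]
      · exact absurd h (hg_pos _ _).not_negative
    exact fun l _ i hi j hj => add_right_cancel (hv' ((hout hi).trans (hout hj).symm))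

/-! ## Redexes -/

def freshIdx (R : Struct) : ℕ :=
  (Finset.univ.sup fun e : R.Edge => max (R.pIdx e) (R.cIdx e)) + 1

lemma pIdx_lt_freshIdx (e : R.Edge) : R.pIdx e < R.freshIdx :=
  Nat.lt_succ_of_le ((le_max_left _ _).trans
    (Finset.le_sup (f := fun e => max (R.pIdx e) (R.cIdx e)) (Finset.mem_univ e)))

lemma cIdx_lt_freshIdx (e : R.Edge) : R.cIdx e < R.freshIdx :=
  Nat.lt_succ_of_le ((le_max_right _ _).trans
    (Finset.le_sup (f := fun e => max (R.pIdx e) (R.cIdx e)) (Finset.mem_univ e)))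

def restrict (S : Struct) (pE : S.Edge → Prop) (pN : S.Node → Prop) [DecidablePred pE]
    [DecidablePred pN] (hsrc : ∀ e, pE e → pN (S.src e)) : Struct where
  Edge := {e // pE e}
  Node := {n // pN n}
  edgeFintype := inferInstance
  nodeFintype := inferInstance
  edgeDecEq := inferInstance
  nodeDecEq := inferInstance
  typ e := S.typ e
  sort n := S.sort n
  src e := ⟨S.src e, hsrc e e.2⟩
  tgt e := (S.tgt e).bind (subtypeOrNone pN)
  pIdx e := S.pIdx e
  cIdx e := S.cIdx e
  box n := (S.box n).bind (subtypeOrNone pN)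
  boxes n := (S.boxes n).subtype pN

lemma WF.exists_axCutStep (hWF : R.WF) (hC : R.Correct) {c : R.Node} (hc : R.sort c = .cut)
    (hc0 : R.box c = none) {v q : R.Edge} (hvq : v ≠ q) (hprems : R.prems c = {v, q})
    (ha : R.sort (R.src v) = .ax) (ha0 : R.box (R.src v) = none) : ∃ Q, AxCutStep R Q := by
  generalize hv : R.src v = a at ha ha0
  obtain ⟨u, hvu, hconcls⟩ := hWF.exists_ax_concls (hv ▸ ha)
  rw [hv] at hconcls
  have hsrc_u : R.src u = a := mem_concls.1 (hconcls ▸ by simp)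
  have htgt_v : R.tgt v = some c := mem_prems.1 (hprems ▸ by simp)
  have htgt_q : R.tgt q = some c := mem_prems.1 (hprems ▸ by simp)
  have hac : a ≠ c := fun h => by simp [h, hc] at ha
  have huq : u ≠ q := by
    rintro rfl
    refine hC.false_of_two_cycle hvu hac (hv ▸ connectsAt_none htgt_v (hv ▸ ha0) hc0)
      (hsrc_u ▸ connectsAt_none htgt_q (hsrc_u ▸ ha0) hc0) ?_ ?_
    · rintro p hp ⟨h, -⟩
      simp_all
    · rintro l hl ⟨⟨-, ⟨h, -⟩ | ⟨h, -⟩⟩, -⟩ <;> simp_all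
  have hsrc (x : R.Edge) (hx : x ≠ v ∧ x ≠ u) : R.src x ≠ a ∧ R.src x ≠ c := by
    refine ⟨fun h => ?_, hWF.src_ne_of_cut hc x⟩
    have := hconcls ▸ mem_concls.2 h
    simp_all
  have htgt (x : R.Edge) (hxv : x ≠ v) (hxq : x ≠ q) :
      ∀ n ∈ R.tgt x, n ≠ a ∧ n ≠ c := by
    refine fun n hn => ⟨?_, fun h => ?_⟩
    · rintro rfl
      exact hWF.tgt_ne_of_ax ha x hn
    · have := hprems ▸ mem_prems.2 (h ▸ hn)
      simp_all
  have hbox (n : R.Node) : ∀ b ∈ R.box n, b ≠ a ∧ b ≠ c := fun b hb =>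
    ⟨hWF.ne_of_box_eq_some hb (by simp [ha]), hWF.ne_of_box_eq_some hb (by simp [hc])⟩
  refine ⟨restrict
      { R with tgt := update R.tgt q (R.tgt u), pIdx := update R.pIdx q (R.pIdx u) }
      (fun x => x ≠ v ∧ x ≠ u) (fun n => n ≠ a ∧ n ≠ c) hsrc,
    a, c, v, u, q, ha, hc, ha0, hc0, hvu, hvq, huq, hconcls, hprems, fun n => some n.val,
    fun x => some x.val, fun _ => Option.some_ne_none _, fun _ => Option.some_ne_none _,
    pInjOnto_subtype_val _, pInjOnto_subtype_val _, ⟨?_, ?_⟩, ?_⟩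
  · rintro x _ ⟨⟩ (hxq : x.val ≠ q)
    refine ⟨rfl, rfl, ?_, update_of_ne hxq _ _, rfl⟩
    simp only [restrict, update_of_ne hxq]
    exact (bind_subtypeOrNone_bind _ _ (htgt x.1 x.2.1 hxq)).trans (Option.bind_fun_some _)
  · rintro n _ ⟨⟩ -
    refine ⟨rfl, (bind_subtypeOrNone_bind _ _ (hbox n.1)).trans (Option.bind_fun_some _), ?_⟩
    rintro b _ ⟨⟩
    exact Finset.mem_subtype
  · intro x hxq
    obtain hxq : x.1 = q := Option.some_injective _ hxq
    refine ⟨congrArg R.typ hxq, congrArg (some ∘ R.src) hxq, ?_, ?_, congrArg R.cIdx hxq⟩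
    · simp only [restrict, hxq, update_self]
      exact (bind_subtypeOrNone_bind _ _ (htgt u hvu.symm huq)).trans (Option.bind_fun_some _)
    · simp only [restrict, hxq, update_self]

lemma WF.exists_tensParrStep (hWF : R.WF) {c : R.Node} (hc : R.sort c = .cut)
    (hc0 : R.box c = none) {s s' : R.Edge} (hss' : s ≠ s') (hprems : R.prems c = {s, s'})
    (ht : R.sort (R.src s) = .tens) (ht0 : R.box (R.src s) = none)
    (hp : R.sort (R.src s') = .parr) (hp0 : R.box (R.src s') = none) :
    ∃ Q, TensParrStep R Q := by
  obtain ⟨a1, a2, ha12, hprems_t, ha1, ha2, hconcls_t, -⟩ := hWF.tens_concl ht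
  obtain ⟨b1, b2, hb12, hprems_p, hb1, hb2, hconcls_p, -⟩ := hWF.parr_concl hp
  generalize R.src s = t at *
  generalize R.src s' = p at *
  have htgt_t (x : R.Edge) : R.tgt x = some t ↔ x = a1 ∨ x = a2 := by
    rw [← mem_prems, hprems_t]; simp
  have htgt_p (x : R.Edge) : R.tgt x = some p ↔ x = b1 ∨ x = b2 := by
    rw [← mem_prems, hprems_p]; simp
  have hct : c ≠ t := by rintro rfl; simp_all
  have hcp : c ≠ p := by rintro rfl; simp_all
  have htp : t ≠ p := by rintro rfl; simp_all
  have hab (x y : R.Edge) (hx : x = a1 ∨ x = a2) (hy : y = b1 ∨ y = b2) : x ≠ y := by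
    rintro rfl
    have := ((htgt_t x).2 hx).symm.trans ((htgt_p x).2 hy)
    simp_all
  have hsrc (x : R.Edge) (hx : x ≠ s ∧ x ≠ s') : R.src x ≠ p := fun h => by
    have := hconcls_p ▸ mem_concls.2 h
    simp_all
  have hsrc_t (x : R.Edge) (hx : x ≠ s) : R.src x ≠ t := fun h => by
    have := hconcls_t ▸ mem_concls.2 h
    simp_all
  have hbox (n : R.Node) : ∀ b ∈ R.box n, b ≠ t ∧ b ≠ p := fun b hb =>
    ⟨hWF.ne_of_box_eq_some hb (by simp [ht]), hWF.ne_of_box_eq_some hb (by simp [hp])⟩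
  let jN (n : {n // n ≠ p}) : Option R.Node := if n.1 = t then none else some n.1
  have hjN (n : R.Node) (hn : n ≠ t ∧ n ≠ p) :
      (subtypeOrNone (· ≠ p) n).bind jN = some n := by
    simp [subtypeOrNone, hn.2, jN, hn.1]
  -- `t` becomes the new cut between `a2` and `b2`.
  refine ⟨restrict { R with
      sort := update R.sort t .cut
      tgt := fun x => if x = a1 ∨ x = b1 then some c else if x = a2 ∨ x = b2 then some t
        else R.tgt x }
      (fun x => x ≠ s ∧ x ≠ s') (· ≠ p) hsrc,
    c, t, p, s, s', a1, a2, b1, b2, hc, ht, hp, hc0, ht0, hp0, hss', hprems, hconcls_t,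
    hconcls_p, ha12, hprems_t, ha1, ha2, hb12, hprems_p, hb1, hb2,
    jN, fun x => some x.1, ⟨t, htp⟩, fun _ => Option.some_ne_none _,
    pInjOnto_subtype_ite_none (· ≠ p) t, pInjOnto_subtype_val _, if_pos rfl,
    fun n hn => Subtype.ext (by simpa [jN] using hn), update_self .., by simp [restrict, ht0],
    Finset.subtype_eq_empty.2 fun _ _ => by simp [hWF.boxes_eq_empty ht0], ⟨?_, ?_⟩, ?_, ?_⟩
  · rintro x _ ⟨⟩ hx
    simp only [Set.mem_insert_iff, Set.mem_singleton_iff, not_or] at hx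
    refine ⟨rfl, if_neg (hsrc_t x.1 x.2.1), ?_, rfl, rfl⟩
    simp only [restrict, if_neg (show ¬(x.1 = a1 ∨ x.1 = b1) by tauto),
      if_neg (show ¬(x.1 = a2 ∨ x.1 = b2) by tauto)]
    cases h : R.tgt x.1 with
    | none => rfl
    | some n =>
      refine hjN n ⟨fun hn => ?_, fun hn => ?_⟩ <;> subst hn
      · exact absurd ((htgt_t x.1).1 h) (by tauto)
      · exact absurd ((htgt_p x.1).1 h) (by tauto)
  · rintro n m hnm -
    obtain ⟨hn, rfl⟩ := eq_of_ite_none_eq_some hnm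
    refine ⟨update_of_ne hn _ _, ?_, fun b b' hb => ?_⟩
    · cases h : R.box n.1 with
      | none => simp [restrict, h]
      | some b =>
        simp only [restrict, h, Option.bind_some]
        exact hjN b (hbox n.1 b h)
    · obtain ⟨-, rfl⟩ := eq_of_ite_none_eq_some hb
      exact Finset.mem_subtype
  · rintro x y ⟨⟩ hy
    refine ⟨rfl, if_neg (hsrc_t x.1 x.2.1), ?_, rfl⟩
    simp only [restrict, if_pos hy]
    exact hjN c ⟨hct, hcp⟩
  · rintro x y ⟨⟩ hy
    refine ⟨rfl, if_neg (hsrc_t x.1 x.2.1), ?_, rfl⟩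
    have : ¬(x.1 = a1 ∨ x.1 = b1) := by
      rintro (h | h) <;> rcases hy with hy | hy <;> rw [h] at hy
      exacts [ha12 hy, hab _ _ (.inl rfl) (.inr rfl) hy, hab _ _ (.inr rfl) (.inl rfl) hy.symm,
        hb12 hy]
    simp [restrict, if_neg this, if_pos hy, subtypeOrNone, htp]

lemma WF.exists_syncCutStep (hWF : R.WF) {c : R.Node} (hc : R.sort c = .cut)
    (hc0 : R.box c = none) {d' q : R.Edge} (hd'q : d' ≠ q) (hprems : R.prems c = {d', q})
    (hl : R.sort (R.src d') = .sync) (hl0 : R.box (R.src d') = none)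
    (hneg : (R.typ d').Negative) : ∃ Q, SyncCutStep R Q := by
  obtain ⟨d, htgt_d, hidx, -⟩ := hWF.exists_sync_prem hl rfl
  generalize hsrc_d' : R.src d' = l at *
  have htgt_d' : R.tgt d' = some c := mem_prems.1 (hprems ▸ by simp)
  have htgt_q : R.tgt q = some c := mem_prems.1 (hprems ▸ by simp)
  have hlc : l ≠ c := by rintro rfl; simp_all
  have hdq : d ≠ q := by rintro rfl; simp_all
  have hdd' : d ≠ d' := by rintro rfl; simp_all
  -- `d'` becomes the fresh edge from `l` to `c` that continues `q`.
  refine ⟨{ R with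
      typ := update R.typ d' (R.typ q)
      tgt := update (update R.tgt d (some c)) q (some l)
      pIdx := update (update (update R.pIdx d' (R.pIdx q)) d (R.pIdx d')) q R.freshIdx
      cIdx := update R.cIdx d' R.freshIdx },
    l, c, d, d', q, R.freshIdx, hl, hc, hl0, hc0, hneg, hsrc_d', htgt_d', htgt_d, hidx, hd'q, hdq,
    hdd', hprems, fun e _ => (pIdx_lt_freshIdx e).ne, fun e _ => (cIdx_lt_freshIdx e).ne,
    some, fun x => if x = d' then none else some x, l, c, d', fun _ => Option.some_ne_none _,
    pInjOnto_some_univ, pInjOnto_ite_none d', rfl, rfl, if_pos rfl,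
    fun x hx => by simpa using hx, ⟨?_, ?_⟩, ?_, ?_, ?_⟩
  · rintro x y hxy hy
    obtain ⟨hx, rfl⟩ := eq_of_ite_none_eq_some hxy
    simp only [Set.mem_insert_iff, Set.mem_singleton_iff, not_or] at hy
    simp [update_of_ne hx, update_of_ne hy.1, update_of_ne hy.2]
  · rintro n m ⟨⟩ -
    exact ⟨rfl, Option.bind_fun_some _, fun b b' hb => by cases hb; rfl⟩
  · rintro x hx
    obtain ⟨-, hx⟩ := eq_of_ite_none_eq_some hx
    subst x
    simp [hdq, hdd']
  · rintro x hx
    obtain ⟨-, hx⟩ := eq_of_ite_none_eq_some hx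
    subst x
    simp [hd'q.symm]
  · simp [hd'q, hdd'.symm, htgt_d', hsrc_d']

lemma WF.exists_syncAxStep (hWF : R.WF) {l : R.Node} (hl : R.sort l = .sync)
    (hl0 : R.box l = none) {u : R.Edge} (htgt_u : R.tgt u = some l) (hpos : (R.typ u).Positive)
    (ha : R.sort (R.src u) = .ax) (ha0 : R.box (R.src u) = none) : ∃ Q, SyncAxStep R Q := by
  obtain ⟨u', hsrc_u', hidx, -⟩ := hWF.exists_sync_concl hl htgt_u
  obtain ⟨v, huv, hconcls⟩ := hWF.exists_ax_concls ha
  generalize hsrc_u : R.src u = a at *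
  have hsrc_v : R.src v = a := mem_concls.1 (hconcls ▸ by simp)
  have hla : l ≠ a := by rintro rfl; simp_all
  have hu'u : u' ≠ u := by rintro rfl; simp_all
  have hu'v : u' ≠ v := by rintro rfl; simp_all
  -- `u` becomes the fresh conclusion of `l` that continues `v`.
  refine ⟨{ R with
      typ := update R.typ u (R.typ v)
      src := update (update R.src u' a) u l
      tgt := update (update R.tgt v (some l)) u (R.tgt v)
      pIdx := update (update R.pIdx v R.freshIdx) u (R.pIdx v)
      cIdx := update (update R.cIdx u' (R.cIdx u)) u R.freshIdx },
    l, a, u, u', v, R.freshIdx, hl, ha, hl0, ha0, hpos, huv, hconcls, htgt_u, hsrc_u', hidx, hu'u,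
    hu'v, fun e _ => (pIdx_lt_freshIdx e).ne, fun e _ => (cIdx_lt_freshIdx e).ne,
    some, fun x => if x = u then none else some x, l, a, u, fun _ => Option.some_ne_none _,
    pInjOnto_some_univ, pInjOnto_ite_none u, rfl, rfl, if_pos rfl,
    fun x hx => by simpa using hx, ⟨?_, ?_⟩, ?_, ?_, ?_⟩
  · rintro x y hxy hy
    obtain ⟨hx, rfl⟩ := eq_of_ite_none_eq_some hxy
    simp only [Set.mem_insert_iff, Set.mem_singleton_iff, not_or] at hy
    simp [update_of_ne hx, update_of_ne hy.1, update_of_ne hy.2]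
  · rintro n m ⟨⟩ -
    exact ⟨rfl, Option.bind_fun_some _, fun b b' hb => by cases hb; rfl⟩
  · rintro x hx
    obtain ⟨-, hx⟩ := eq_of_ite_none_eq_some hx
    subst x
    simp [hu'u, hu'v]
  · rintro x hx
    obtain ⟨-, hx⟩ := eq_of_ite_none_eq_some hx
    subst x
    simp [huv.symm, hu'v.symm, hsrc_v]
  · simp

/-- The commutation of the sync link `l` with the `⊗`-link `m` of premisses `x`, `y` and
conclusion `z`, the conclusion of `l` matching `z` being `w`: the edge `z` is reused as the new
edge from `l` to `m` that continues `x`, and `none` is the one that continues `y`. -/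
def syncMultReduct (R : Struct) (l m : R.Node) (z w x y : R.Edge) : Struct where
  Edge := Option R.Edge
  Node := R.Node
  edgeFintype := inferInstance
  nodeFintype := inferInstance
  edgeDecEq := inferInstance
  nodeDecEq := inferInstance
  typ o := o.elim (R.typ y) (update R.typ z (R.typ x))
  sort := R.sort
  src o := o.elim l (update (update R.src w m) z l)
  tgt o := o.elim (some m) (update (update (update R.tgt x (some l)) y (some l)) z (some m))
  pIdx o := o.elim 1 (update (update (update R.pIdx x R.freshIdx) y (R.freshIdx + 1)) z 0)
  cIdx o := o.elim (R.freshIdx + 1) (update R.cIdx z R.freshIdx)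
  box := R.box
  boxes := R.boxes

lemma WF.exists_syncMultStep (hWF : R.WF) (hC : R.Correct) {l : R.Node} (hl : R.sort l = .sync)
    (hl0 : R.box l = none) {z : R.Edge} (htgt_z : R.tgt z = some l) (hpos : (R.typ z).Positive)
    (hm : R.sort (R.src z) = .tens) (hm0 : R.box (R.src z) = none) : ∃ Q, SyncMultStep R Q := by
  obtain ⟨w, hsrc_w, hidx, -⟩ := hWF.exists_sync_concl hl htgt_z
  obtain ⟨x, y, hxy, hprems, hx, hy, -, -⟩ := hWF.tens_concl hm
  generalize hsrc_z : R.src z = m at *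
  have htgt_x : R.tgt x = some m := mem_prems.1 (hprems ▸ by simp)
  have htgt_y : R.tgt y = some m := mem_prems.1 (hprems ▸ by simp)
  have hlm : l ≠ m := by rintro rfl; simp_all
  have hwz : w ≠ z := by rintro rfl; simp_all
  have hxz : x ≠ z := by rintro rfl; simp_all
  have hyz : y ≠ z := by rintro rfl; simp_all
  have htgt_w : R.tgt w ≠ some m := fun h => by
    refine hC.false_of_two_cycle hwz.symm hlm.symm
      (hsrc_z ▸ connectsAt_none htgt_z (hsrc_z ▸ hm0) hl0)
      (hsrc_w ▸ connectsAt_none h (hsrc_w ▸ hl0) hm0).symm ?_ ?_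
    · rintro p hp ⟨h, -⟩
      simp_all
    · rintro l' hl' ⟨⟨-, ⟨h, -⟩ | ⟨-, h⟩⟩, -⟩
      · simp_all
      · exact hpos.not_negative h
  have hwx : w ≠ x := by rintro rfl; exact htgt_w htgt_x
  have hwy : w ≠ y := by rintro rfl; exact htgt_w htgt_y
  refine ⟨syncMultReduct R l m z w x y,
    l, m, z, w, x, y, R.freshIdx, R.freshIdx + 1, hl, .inl hm, hl0, hm0, hsrc_z, htgt_z, hsrc_w,
    hidx, hxy, hprems, hx, hy, by omega,
    fun e _ => ⟨(pIdx_lt_freshIdx e).ne, ((pIdx_lt_freshIdx e).trans (by omega)).ne⟩,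
    fun e _ => ⟨(cIdx_lt_freshIdx e).ne, ((cIdx_lt_freshIdx e).trans (by omega)).ne⟩,
    some, fun o => o.bind fun e => if e = z then none else some e, l, m, some z, none,
    fun _ => Option.some_ne_none _, pInjOnto_some_univ, (pInjOnto_ite_none z).bind, rfl, rfl,
    Option.some_ne_none _, if_pos rfl, rfl, ?_, ⟨?_, ?_⟩, ?_, ?_, ?_, by simp [syncMultReduct],
    ⟨rfl, rfl, rfl, rfl, rfl⟩⟩
  · rintro (_ | e) h
    · exact .inr rfl
    · exact .inl (congrArg some (by simpa using h))
  · rintro (_ | e) e' h he'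
    · exact absurd h (by simp)
    obtain ⟨he, rfl⟩ := eq_of_ite_none_eq_some h
    simp only [Set.mem_insert_iff, Set.mem_singleton_iff, not_or] at he'
    simp [syncMultReduct, update_of_ne he, update_of_ne he'.1, update_of_ne he'.2.1,
      update_of_ne he'.2.2]
  · rintro n m ⟨⟩ -
    exact ⟨rfl, Option.bind_fun_some _, fun b b' hb => by cases hb; rfl⟩
  all_goals
    rintro (_ | e) h
    · exact absurd h (by simp)
    obtain ⟨-, h⟩ := eq_of_ite_none_eq_some h
    subst e
  · simp [syncMultReduct, hxz, hwx.symm, hxy]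
  · simp [syncMultReduct, hyz, hwy.symm]
  · simp [syncMultReduct, hwz, hwx, hwy]

/-! ## Normal forms -/

lemma sort_src_eq_sync_of_positive_prem (hWF : R.WF) (hC : R.Correct) (h0 : R.UnitFree)
    (hnf : ∀ Q : Struct, ¬ Step R Q) {l : R.Node} (hl : R.sort l = .sync) {g : R.Edge}
    (hg : R.tgt g = some l) (hpos : (R.typ g).Positive) : R.sort (R.src g) = .sync := by
  have hbox := h0.box_eq_none hWF
  cases hs : R.sort (R.src g) with
  | sync => rfl
  | ax =>
    obtain ⟨Q, hQ⟩ := hWF.exists_syncAxStep hl (hbox l) hg hpos hs (hbox _)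
    exact (hnf Q (.inr (.inr (.inl (.inr (.inl hQ)))))).elim
  | tens =>
    obtain ⟨Q, hQ⟩ := hWF.exists_syncMultStep hC hl (hbox l) hg hpos hs (hbox _)
    exact (hnf Q (.inr (.inr (.inl (.inl hQ))))).elim
  | parr =>
    obtain ⟨_, _, -, -, -, -, -, htyp⟩ := hWF.parr_concl hs
    rw [htyp] at hpos
    cases hpos
  | cut => exact absurd rfl (hWF.src_ne_of_cut hs g)
  | one => exact absurd hs (h0 _).1
  | bot => exact absurd hs (h0 _).2

lemma not_positive_of_src_sync (hWF : R.WF) (hC : R.Correct) (h0 : R.UnitFree)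
    (hnf : ∀ Q : Struct, ¬ Step R Q) {f : R.Edge} (hf : R.sort (R.src f) = .sync) :
    ¬ (R.typ f).Positive := fun hpos => by
  refine hC.false_of_positive_sync_predecessors
    (fun n => R.sort n = .sync ∧ ∃ f, R.src f = n ∧ (R.typ f).Positive)
    (fun n hn => ⟨hn.1, h0.box_eq_none hWF n⟩) ?_ ⟨hf, f, rfl, hpos⟩
  rintro n ⟨hn, f, rfl, hpos⟩
  obtain ⟨g, hg, -, htyp⟩ := hWF.exists_sync_prem hn rfl
  rw [htyp] at hpos
  exact ⟨g, hg, hpos, sort_src_eq_sync_of_positive_prem hWF hC h0 hnf hn hg hpos, g, rfl, hpos⟩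

lemma sort_src_of_cut_prem (hWF : R.WF) (hC : R.Correct) (h0 : R.UnitFree)
    (hnf : ∀ Q : Struct, ¬ Step R Q) {c : R.Node} (hc : R.sort c = .cut) {e f : R.Edge}
    (hef : e ≠ f) (hprems : R.prems c = {e, f}) :
    R.sort (R.src e) = .tens ∨ R.sort (R.src e) = .parr := by
  have hbox := h0.box_eq_none hWF
  cases hs : R.sort (R.src e) with
  | tens => exact .inl rfl
  | parr => exact .inr rfl
  | ax =>
    obtain ⟨Q, hQ⟩ := hWF.exists_axCutStep hC hc (hbox c) hef hprems hs (hbox _)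
    exact (hnf Q (.inl hQ)).elim
  | sync =>
    rcases hWF.polarized_of_src_sync hs with hpos | hneg
    · exact (not_positive_of_src_sync hWF hC h0 hnf hs hpos).elim
    · obtain ⟨Q, hQ⟩ := hWF.exists_syncCutStep hc (hbox c) hef hprems hs (hbox _) hneg
      exact (hnf Q (.inr (.inr (.inl (.inr (.inr (.inl hQ))))))).elim
  | cut => exact absurd rfl (hWF.src_ne_of_cut hs e)
  | one => exact absurd hs (h0 _).1
  | bot => exact absurd hs (h0 _).2

end Struct

/-- **SMLL⁰ Normal Forms.**  If `R` is an SMLL⁰ net (no unit links, hence no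
boxes) in normal form for the reduction relation `→`, then `R` is cut-free. -/
theorem smll0_normal_forms_cut_free (R : Struct) (hWF : R.WF) (hC : R.Correct)
    (h0 : R.UnitFree) (hnf : ∀ Q : Struct, ¬ Step R Q) :
    ∀ n : R.Node, R.sort n ≠ .cut := by
  intro c hc
  have hbox := h0.box_eq_none hWF
  obtain ⟨-, e, f, hef, hprems, hdual⟩ := hWF.2.1 c hc
  have hprems' : R.prems c = {f, e} := hprems.trans (Finset.pair_comm e f)
  have htyp_e := Struct.sort_src_of_cut_prem hWF hC h0 hnf hc hef hprems
  have htyp_f := Struct.sort_src_of_cut_prem hWF hC h0 hnf hc hef.symm hprems'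
  rcases htyp_e with he | he <;> rcases htyp_f with hf | hf
  · obtain ⟨_, _, -, -, -, -, -, hte⟩ := hWF.tens_concl he
    obtain ⟨_, _, -, -, -, -, -, htf⟩ := hWF.tens_concl hf
    simp [hte, htf, Formula.dual] at hdual
  · obtain ⟨Q, hQ⟩ := hWF.exists_tensParrStep hc (hbox c) hef hprems he (hbox _) hf (hbox _)
    exact hnf Q (.inr (.inl hQ))
  · obtain ⟨Q, hQ⟩ :=
      hWF.exists_tensParrStep hc (hbox c) hef.symm hprems' hf (hbox _) he (hbox _)
    exact hnf Q (.inr (.inl hQ))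
  · obtain ⟨_, _, -, -, -, -, -, hte⟩ := hWF.parr_concl he
    obtain ⟨_, _, -, -, -, -, -, htf⟩ := hWF.parr_concl hf
    simp [hte, htf, Formula.dual] at hdual
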